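/- Let X ∈ ℝ^{n×k} have rank k and Σ = XX^T = UDU^T with U ∈ St(n,k), D diagonal positive. For V symmetric with X_⊥^T V X_⊥ = 0, the horizontal lift V^# = X(X^TX)^{−1}F + X_⊥K with F = S_{X^TX}(X^TVX) and K = X_⊥^T V X(X^TX)^{−1} satisfies X(V^#)^T + V^#X^T = V. -/

import Mathlib

/-!
With `A = XᵀX` (invertible since `X` has full column rank), `P = X A⁻¹ Xᵀ` and `Q = X_⊥ X_⊥ᵀ`
are complementary projections: `P + Q = 1`. Expanding, `X (V^#)ᵀ + V^# Xᵀ` equals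
`X (F A⁻¹ + A⁻¹ F) Xᵀ + PVQ + QVP`, and conjugating the Sylvester equation by `A⁻¹` turns the
first term into `PVP`. Since `QVQ = 0`, the sum is `(P + Q) V (P + Q) = V`.
-/

open Matrix

namespace Matrix

variable {m n p K : Type*} [Fintype m] [Fintype n] [Fintype p]

theorem isUnit_of_rank_eq_card [Field K] [DecidableEq n] {A : Matrix n n K}
    (h : A.rank = Fintype.card n) : IsUnit A := by
  have hrange : LinearMap.range A.mulVecLin = ⊤ :=
    Submodule.eq_top_of_finrank_eq (by rw [← rank, h, Module.finrank_fintype_fun_eq_card])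
  exact mulVec_surjective_iff_isUnit.mp (LinearMap.range_eq_top.mp hrange)

theorem isUnit_transpose_mul_self_of_rank_eq_card [Field K] [LinearOrder K]
    [IsStrictOrderedRing K] [DecidableEq n] {X : Matrix m n K} (h : X.rank = Fintype.card n) :
    IsUnit (Xᵀ * X) :=
  isUnit_of_rank_eq_card (by rw [rank_transpose_mul_self, h])

theorem mul_add_mul_eq_one_of_equiv_sum [CommRing K] [DecidableEq m] [DecidableEq n]
    [DecidableEq p] (e : m ≃ n ⊕ p) {A₁ : Matrix m n K} {A₂ : Matrix m p K}
    {B₁ : Matrix n m K} {B₂ : Matrix p m K} (h₁₁ : B₁ * A₁ = 1) (h₁₂ : B₁ * A₂ = 0)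
    (h₂₁ : B₂ * A₁ = 0) (h₂₂ : B₂ * A₂ = 1) : A₁ * B₁ + A₂ * B₂ = 1 := by
  rw [← fromCols_mul_fromRows, fromCols_mul_fromRows_eq_one_comm e, fromRows_mul_fromCols,
    h₁₁, h₁₂, h₂₁, h₂₂, fromBlocks_one]

theorem mul_inv_mul_transpose_add_mul_transpose_eq_one [Field K] [LinearOrder K]
    [IsStrictOrderedRing K] {n k : ℕ} {X : Matrix (Fin n) (Fin k) K} (hX : X.rank = k)
    {Xp : Matrix (Fin n) (Fin (n - k)) K} (hXp1 : Xpᵀ * Xp = 1) (hXp2 : Xᵀ * Xp = 0) :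
    X * ((Xᵀ * X)⁻¹ * Xᵀ) + Xp * Xpᵀ = 1 := by
  have hkn : k ≤ n := by simpa [hX] using rank_le_card_height X
  have hdet : IsUnit (Xᵀ * X).det :=
    (isUnit_iff_isUnit_det _).mp (isUnit_transpose_mul_self_of_rank_eq_card (by simpa using hX))
  refine mul_add_mul_eq_one_of_equiv_sum
    ((finCongr (Nat.add_sub_cancel' hkn).symm).trans finSumFinEquiv.symm) ?_ ?_ ?_ hXp1
  · rw [Matrix.mul_assoc, nonsing_inv_mul _ hdet]
  · rw [Matrix.mul_assoc, hXp2, Matrix.mul_zero]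
  · rw [← transpose_transpose X, ← transpose_mul, hXp2, transpose_zero]

theorem mul_nonsing_inv_add_nonsing_inv_mul_of_sylvester [CommRing K] [DecidableEq n]
    {A F B : Matrix n n K} (hA : IsUnit A.det) (h : A * F + F * A = B) :
    F * A⁻¹ + A⁻¹ * F = A⁻¹ * B * A⁻¹ := by
  rw [← h, Matrix.mul_add, Matrix.add_mul, ← Matrix.mul_assoc, nonsing_inv_mul _ hA,
    Matrix.one_mul, Matrix.mul_assoc, Matrix.mul_assoc, mul_nonsing_inv _ hA, Matrix.mul_one,
    add_comm]

end Matrix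

theorem mul_mul_add_mul_mul_add_mul_mul_eq_self {R : Type*} [Ring R] {P Q V : R}
    (hPQ : P + Q = 1) (hQVQ : Q * V * Q = 0) : P * V * P + P * V * Q + Q * V * P = V :=
  calc P * V * P + P * V * Q + Q * V * P = (P + Q) * V * (P + Q) - Q * V * Q := by noncomm_ring
    _ = V := by rw [hPQ, hQVQ, sub_zero, one_mul, mul_one]

theorem horizontal_lift_fixed_rank (n k : ℕ)
    (X : Matrix (Fin n) (Fin k) ℝ) (hX : X.rank = k)
    (Xp : Matrix (Fin n) (Fin (n - k)) ℝ)
    (hXp1 : Xpᵀ * Xp = 1) (hXp2 : Xᵀ * Xp = 0)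
    (V : Matrix (Fin n) (Fin n) ℝ) (hV : Vᵀ = V) (hVt : Xpᵀ * V * Xp = 0)
    (F : Matrix (Fin k) (Fin k) ℝ) (hF : Fᵀ = F)
    (hSyl : (Xᵀ * X) * F + F * (Xᵀ * X) = Xᵀ * V * X) :
    X * (X * (Xᵀ * X)⁻¹ * F + Xp * (Xpᵀ * V * X * (Xᵀ * X)⁻¹))ᵀ
      + (X * (Xᵀ * X)⁻¹ * F + Xp * (Xpᵀ * V * X * (Xᵀ * X)⁻¹)) * Xᵀ = V := by
  set A := Xᵀ * X with hA
  have hAdet : IsUnit A.det := (isUnit_iff_isUnit_det _).mp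
    (isUnit_transpose_mul_self_of_rank_eq_card (by simpa using hX))
  have hAinvT : (A⁻¹)ᵀ = A⁻¹ := by rw [transpose_nonsing_inv, hA, transpose_mul, transpose_transpose]
  have hQVQ : Xp * Xpᵀ * V * (Xp * Xpᵀ) = 0 := by
    rw [show Xp * Xpᵀ * V * (Xp * Xpᵀ) = Xp * (Xpᵀ * V * Xp) * Xpᵀ by simp only [Matrix.mul_assoc],
      hVt, Matrix.mul_zero, Matrix.zero_mul]
  calc _ = X * (F * A⁻¹ + A⁻¹ * F) * Xᵀ + X * (A⁻¹ * Xᵀ) * V * (Xp * Xpᵀ)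
        + Xp * Xpᵀ * V * (X * (A⁻¹ * Xᵀ)) := by
        simp only [transpose_add, transpose_mul, transpose_transpose, hF, hV, hAinvT,
          Matrix.mul_add, Matrix.add_mul, Matrix.mul_assoc]
        abel
    _ = X * (A⁻¹ * Xᵀ) * V * (X * (A⁻¹ * Xᵀ)) + X * (A⁻¹ * Xᵀ) * V * (Xp * Xpᵀ)
        + Xp * Xpᵀ * V * (X * (A⁻¹ * Xᵀ)) := by
        rw [mul_nonsing_inv_add_nonsing_inv_mul_of_sylvester hAdet hSyl]
        simp only [Matrix.mul_assoc]
    _ = V := mul_mul_add_mul_mul_add_mul_mul_eq_self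
        (mul_inv_mul_transpose_add_mul_transpose_eq_one hX hXp1 hXp2) hQVQ
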